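/- arXiv:2003.07796 — 5 statements merged into one kernel-verified Lean document; each statement's English description precedes it below -/
import Mathlib

section
/- Let C^v = V·C with V = diag(a+ib, a-ib), C = [[C11, C12],[C12, C11]], where a, b, C11, C12 are real, a > 0, C12 < 0, C11 > -C12. Define b₀ = a·|C12| / sqrt(C11² - C12²). Then: (i) if 0 ≤ b < b₀ the matrix C^v has two distinct real eigenvalues; (ii) if b > b₀ it has two distinct non-real eigenvalues which are complex conjugates of each other; (iii) if b = b₀ it has a single eigenvalue a·C11 of algebraic multiplicity 2. -/
/-!
The characteristic polynomial of `C^v` is `(λ - a C₁₁)² - Δ` with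
`Δ = a² C₁₂² - b² (C₁₁² - C₁₂²) = (C₁₁² - C₁₂²)(b₀² - b²)`, so the three regimes are the
three signs of `Δ`: the roots `a C₁₁ ± √Δ` are real and distinct, non-real conjugates
`a C₁₁ ± i √(-Δ)`, or a double root `a C₁₁`.
-/

open Matrix Complex

noncomputable def Cv0 (a b C11 C12 : ℝ) : Matrix (Fin 2) (Fin 2) ℂ :=
  !![((a : ℂ) + Complex.I * b) * (C11 : ℂ), ((a : ℂ) + Complex.I * b) * (C12 : ℂ);
     ((a : ℂ) - Complex.I * b) * (C12 : ℂ), ((a : ℂ) - Complex.I * b) * (C11 : ℂ)]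

namespace Cv0

def discr (a b C11 C12 : ℝ) : ℝ :=
  a ^ 2 * C12 ^ 2 - b ^ 2 * (C11 ^ 2 - C12 ^ 2)

variable (a b C11 C12 : ℝ)

theorem det_sub_smul_one (lam : ℂ) :
    (Cv0 a b C11 C12 - lam • (1 : Matrix (Fin 2) (Fin 2) ℂ)).det =
      (lam - ((a * C11 : ℝ) : ℂ)) ^ 2 - (discr a b C11 C12 : ℂ) := by
  simp only [Cv0, discr, det_fin_two, Fin.isValue, Matrix.sub_apply, of_apply, cons_val',
    cons_val_zero, cons_val_fin_one, Matrix.smul_apply, one_apply_eq, smul_eq_mul, mul_one,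
    cons_val_one, ne_eq, zero_ne_one, not_false_eq_true, one_apply_ne, mul_zero, sub_zero,
    one_ne_zero, ofReal_mul, ofReal_sub, ofReal_pow]
  linear_combination (-(b : ℂ) ^ 2 * ((C11 : ℂ) ^ 2 - (C12 : ℂ) ^ 2)) * I_sq

theorem det_sub_smul_one_eq_zero_iff {w : ℂ} (hw : w ^ 2 = (discr a b C11 C12 : ℂ))
    (lam : ℂ) :
    (Cv0 a b C11 C12 - lam • (1 : Matrix (Fin 2) (Fin 2) ℂ)).det = 0 ↔
      lam = ((a * C11 : ℝ) : ℂ) + w ∨ lam = ((a * C11 : ℝ) : ℂ) - w := by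
  rw [det_sub_smul_one, ← hw, sub_eq_zero, sq_eq_sq_iff_eq_or_eq_neg,
    sub_eq_iff_eq_add', sub_eq_iff_eq_add', ← sub_eq_add_neg]

theorem exists_real_eigenvalues_of_discr_pos (hpos : 0 < discr a b C11 C12) :
    ∃ l1 l2 : ℝ, l1 ≠ l2 ∧
      (Cv0 a b C11 C12 - (l1 : ℂ) • (1 : Matrix (Fin 2) (Fin 2) ℂ)).det = 0 ∧
      (Cv0 a b C11 C12 - (l2 : ℂ) • (1 : Matrix (Fin 2) (Fin 2) ℂ)).det = 0 ∧
      ∀ lam : ℂ, (Cv0 a b C11 C12 - lam • (1 : Matrix (Fin 2) (Fin 2) ℂ)).det = 0 →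
        lam = (l1 : ℂ) ∨ lam = (l2 : ℂ) := by
  set s := √(discr a b C11 C12)
  have hs : (s : ℂ) ^ 2 = (discr a b C11 C12 : ℂ) := by
    exact_mod_cast Real.sq_sqrt hpos.le
  have hroots := det_sub_smul_one_eq_zero_iff a b C11 C12 hs
  refine ⟨a * C11 + s, a * C11 - s, fun h => by linarith [Real.sqrt_pos.2 hpos],
    (hroots _).2 (Or.inl (by push_cast; ring)), (hroots _).2 (Or.inr (by push_cast; ring)),
    fun lam h => by exact_mod_cast (hroots lam).1 h⟩

theorem exists_conj_eigenvalues_of_discr_neg (hneg : discr a b C11 C12 < 0) :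
    ∃ lam : ℂ, lam.im ≠ 0 ∧
      (Cv0 a b C11 C12 - lam • (1 : Matrix (Fin 2) (Fin 2) ℂ)).det = 0 ∧
      (Cv0 a b C11 C12 - (starRingEnd ℂ lam) • (1 : Matrix (Fin 2) (Fin 2) ℂ)).det = 0 ∧
      lam ≠ starRingEnd ℂ lam ∧
      ∀ mu : ℂ, (Cv0 a b C11 C12 - mu • (1 : Matrix (Fin 2) (Fin 2) ℂ)).det = 0 →
        mu = lam ∨ mu = starRingEnd ℂ lam := by
  set s := √(-discr a b C11 C12)
  have hs : ((s : ℂ) * I) ^ 2 = (discr a b C11 C12 : ℂ) := by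
    rw [mul_pow, I_sq, ← ofReal_pow, Real.sq_sqrt (neg_nonneg.2 hneg.le)]
    push_cast
    ring
  have hroots := det_sub_smul_one_eq_zero_iff a b C11 C12 hs
  set lam : ℂ := ((a * C11 : ℝ) : ℂ) + s * I
  have him : lam.im ≠ 0 := by simpa [lam] using (Real.sqrt_pos.2 (neg_pos.2 hneg)).ne'
  have hconj : starRingEnd ℂ lam = ((a * C11 : ℝ) : ℂ) - s * I := by
    simp only [lam, map_add, map_mul, conj_ofReal, conj_I]
    ring
  exact ⟨lam, him, (hroots _).2 (Or.inl rfl), (hroots _).2 (Or.inr hconj),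
    fun h => him (conj_eq_iff_im.1 h.symm), fun mu h => hconj ▸ (hroots mu).1 h⟩

theorem discr_eq_mul {b0 : ℝ} (hD : 0 < C11 ^ 2 - C12 ^ 2)
    (hb0 : b0 = a * |C12| / Real.sqrt (C11 ^ 2 - C12 ^ 2)) :
    discr a b C11 C12 = (C11 ^ 2 - C12 ^ 2) * ((b0 - b) * (b0 + b)) := by
  have hb0sq : b0 ^ 2 * (C11 ^ 2 - C12 ^ 2) = a ^ 2 * C12 ^ 2 := by
    rw [hb0, div_pow, mul_pow, sq_abs, Real.sq_sqrt hD.le, div_mul_cancel₀ _ hD.ne']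
  unfold discr
  linear_combination -hb0sq

end Cv0

theorem stmt1 (a b C11 C12 : ℝ) (ha : 0 < a) (h12 : C12 < 0) (h11 : -C12 < C11)
    (b0 : ℝ) (hb0 : b0 = a * |C12| / Real.sqrt (C11 ^ 2 - C12 ^ 2)) :
    -- (i) two distinct real eigenvalues when 0 ≤ b < b₀
    (0 ≤ b → b < b0 →
      ∃ l1 l2 : ℝ, l1 ≠ l2 ∧
        (Cv0 a b C11 C12 - (l1 : ℂ) • (1 : Matrix (Fin 2) (Fin 2) ℂ)).det = 0 ∧
        (Cv0 a b C11 C12 - (l2 : ℂ) • (1 : Matrix (Fin 2) (Fin 2) ℂ)).det = 0 ∧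
        ∀ lam : ℂ, (Cv0 a b C11 C12 - lam • (1 : Matrix (Fin 2) (Fin 2) ℂ)).det = 0 →
          lam = (l1 : ℂ) ∨ lam = (l2 : ℂ)) ∧
    -- (ii) two distinct non-real conjugate eigenvalues when b > b₀
    (b0 < b →
      ∃ lam : ℂ, lam.im ≠ 0 ∧
        (Cv0 a b C11 C12 - lam • (1 : Matrix (Fin 2) (Fin 2) ℂ)).det = 0 ∧
        (Cv0 a b C11 C12 - (starRingEnd ℂ lam) • (1 : Matrix (Fin 2) (Fin 2) ℂ)).det = 0 ∧
        lam ≠ starRingEnd ℂ lam ∧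
        ∀ mu : ℂ, (Cv0 a b C11 C12 - mu • (1 : Matrix (Fin 2) (Fin 2) ℂ)).det = 0 →
          mu = lam ∨ mu = starRingEnd ℂ lam) ∧
    -- (iii) single eigenvalue a·C11 of algebraic multiplicity 2 when b = b₀
    (b = b0 →
      ∀ lam : ℂ, (Cv0 a b C11 C12 - lam • (1 : Matrix (Fin 2) (Fin 2) ℂ)).det =
        (lam - ((a * C11 : ℝ) : ℂ)) ^ 2) := by
  have hD : 0 < C11 ^ 2 - C12 ^ 2 := by nlinarith
  have hb0_nonneg : 0 ≤ b0 := hb0 ▸ by positivity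
  have hdiscr := Cv0.discr_eq_mul a b C11 C12 hD hb0
  refine ⟨fun hb hbb0 => ?_, fun hbb0 => ?_, fun hbeq lam => ?_⟩
  · exact Cv0.exists_real_eigenvalues_of_discr_pos a b C11 C12 <|
      hdiscr ▸ mul_pos hD (mul_pos (by linarith) (by linarith))
  · exact Cv0.exists_conj_eigenvalues_of_discr_neg a b C11 C12 <|
      hdiscr ▸ mul_neg_of_pos_of_neg hD (mul_neg_of_neg_of_pos (by linarith) (by linarith))
  · rw [Cv0.det_sub_smul_one, hdiscr, hbeq, sub_self, zero_mul, mul_zero, ofReal_zero, sub_zero]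
end

section
/- With C^v as above and b = b₀ = a·|C12|/sqrt(C11² - C12²), the eigenspace of C^v corresponding to its unique eigenvalue a·C11 is one-dimensional; in particular C^v is not diagonalizable (this is an exceptional point). -/
open Matrix Complex

theorem stmt2 (a C11 C12 : ℝ) (ha : 0 < a) (h12 : C12 < 0) (h11 : -C12 < C11)
    (b0 : ℝ) (hb0 : b0 = a * |C12| / Real.sqrt (C11 ^ 2 - C12 ^ 2)) :
    Module.finrank ℂ
      (LinearMap.ker
        ((Cv0 a b0 C11 C12 - ((a * C11 : ℝ) : ℂ) • (1 : Matrix (Fin 2) (Fin 2) ℂ)).mulVecLin))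
      = 1 ∧
    ¬ ∃ (P : Matrix (Fin 2) (Fin 2) ℂ) (d : Fin 2 → ℂ),
        IsUnit P.det ∧ Cv0 a b0 C11 C12 = P * Matrix.diagonal d * P⁻¹ := by
  have hD : 0 < C11 ^ 2 - C12 ^ 2 := by nlinarith
  have hsq : Real.sqrt (C11 ^ 2 - C12 ^ 2) ^ 2 = C11 ^ 2 - C12 ^ 2 := Real.sq_sqrt hD.le
  have hb0sq : b0 ^ 2 * (C11 ^ 2 - C12 ^ 2) = a ^ 2 * C12 ^ 2 := by
    rw [hb0, div_pow, mul_pow, _root_.sq_abs, hsq]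
    field_simp
  have key : (b0 : ℂ) ^ 2 * ((C11 : ℂ) ^ 2 - (C12 : ℂ) ^ 2) = (a : ℂ) ^ 2 * (C12 : ℂ) ^ 2 := by
    exact_mod_cast congrArg (Complex.ofReal) hb0sq
  -- the off-diagonal entry is nonzero
  have hoff : ((a : ℂ) + Complex.I * b0) * (C12 : ℂ) ≠ 0 := by
    intro h
    have h1 : ((a : ℂ) + Complex.I * b0) = 0 ∨ ((C12 : ℂ)) = 0 := mul_eq_zero.mp h
    rcases h1 with h1 | h1
    · have := congrArg Complex.re h1
      simp [Complex.add_re, Complex.mul_re] at this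
      exact ha.ne' this
    · exact h12.ne (Complex.ofReal_eq_zero.mp h1)
  constructor
  · -- kernel has dimension 1
    set M : Matrix (Fin 2) (Fin 2) ℂ :=
      Cv0 a b0 C11 C12 - ((a * C11 : ℝ) : ℂ) • (1 : Matrix (Fin 2) (Fin 2) ℂ) with hM
    have hM' : M = !![Complex.I * b0 * C11, ((a : ℂ) + Complex.I * b0) * C12;
        ((a : ℂ) - Complex.I * b0) * C12, -(Complex.I * b0 * C11)] := by
      ext i j
      fin_cases i <;> fin_cases j <;>
        simp [hM, Cv0, Matrix.sub_apply, Matrix.smul_apply, Matrix.one_apply] <;> push_cast <;> ring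
    have hdet : M.det = 0 := by
      rw [hM', Matrix.det_fin_two_of]
      linear_combination key + (b0 : ℂ) ^ 2 * ((C12 : ℂ) ^ 2 - (C11 : ℂ) ^ 2) * Complex.I_sq
    have hsum := LinearMap.finrank_range_add_finrank_ker M.mulVecLin
    have hdim : Module.finrank ℂ (Fin 2 → ℂ) = 2 := by simp
    -- kernel is nontrivial
    have hker : LinearMap.ker M.mulVecLin ≠ ⊥ := by
      obtain ⟨v, hv, hMv⟩ := (Matrix.exists_mulVec_eq_zero_iff).mpr hdet
      intro hbot
      exact hv (by simpa [hbot] using (LinearMap.mem_ker.mpr (by simpa using hMv) :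
        v ∈ LinearMap.ker M.mulVecLin))
    -- range is nontrivial
    have hrange : LinearMap.range M.mulVecLin ≠ ⊥ := by
      intro hbot
      have h0 : M.mulVecLin = 0 := LinearMap.range_eq_bot.mp hbot
      have h1 : M.mulVec (Pi.single 1 1) = 0 := by
        rw [← Matrix.mulVecLin_apply, h0]; rfl
      have h2 : M 0 1 = 0 := by
        have := congrFun h1 0
        simpa [Matrix.mulVec_single_one] using this
      rw [hM'] at h2
      simp at h2
      rcases h2 with h2 | h2
      · have := congrArg Complex.re h2
        simp [Complex.add_re, Complex.mul_re] at this
        exact ha.ne' this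
      · exact h12.ne h2
    have hk0 : Module.finrank ℂ (LinearMap.ker M.mulVecLin) ≠ 0 := by
      rw [Ne, Submodule.finrank_eq_zero]; exact hker
    have hr0 : Module.finrank ℂ (LinearMap.range M.mulVecLin) ≠ 0 := by
      rw [Ne, Submodule.finrank_eq_zero]; exact hrange
    rw [hdim] at hsum
    omega
  · -- not diagonalizable
    rintro ⟨P, d, hP, hEq⟩
    have hPinv : P * P⁻¹ = 1 := Matrix.mul_nonsing_inv P hP
    have hinvP : P⁻¹ * P = 1 := Matrix.nonsing_inv_mul P hP
    set s : ℂ := ((a * C11 : ℝ) : ℂ) with hs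
    -- trace
    have htr : d 0 + d 1 = 2 * s := by
      have h1 : (Cv0 a b0 C11 C12).trace = (Matrix.diagonal d).trace := by
        rw [hEq, Matrix.trace_mul_cycle, hinvP, Matrix.one_mul]
      rw [Matrix.trace_fin_two, Matrix.trace_fin_two] at h1
      simp [Cv0, Matrix.diagonal] at h1
      rw [hs]
      push_cast
      linear_combination -h1
    -- det
    have hdt : d 0 * d 1 = s ^ 2 := by
      have h1 : (Cv0 a b0 C11 C12).det = (Matrix.diagonal d).det := by
        rw [hEq, Matrix.det_mul, Matrix.det_mul, mul_comm, ← mul_assoc,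
          ← Matrix.det_mul, hinvP]
        simp
      rw [Matrix.det_fin_two] at h1
      simp [Cv0, Matrix.det_diagonal, Fin.prod_univ_two] at h1
      rw [hs]
      push_cast
      linear_combination -h1 + key - (b0 : ℂ) ^ 2 * ((C11 : ℂ) ^ 2 - (C12 : ℂ) ^ 2) * Complex.I_sq
    have hd01 : d 0 = d 1 := by
      have h2 : (d 0 - d 1) ^ 2 = 0 := by
        linear_combination (d 0 + d 1 + 2 * s) * htr - 4 * hdt
      have := pow_eq_zero_iff (n := 2) (by norm_num) |>.mp h2
      exact sub_eq_zero.mp this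
    have hds : d 0 = s := by linear_combination (htr + hd01) / 2
    have hd1s : d 1 = s := hd01 ▸ hds
    have hdiag : Matrix.diagonal d = s • (1 : Matrix (Fin 2) (Fin 2) ℂ) := by
      ext i j
      fin_cases i <;> fin_cases j <;>
        simp [Matrix.diagonal_apply, Matrix.one_apply, Matrix.smul_apply, hds, hd1s]
    have hfin : Cv0 a b0 C11 C12 = s • (1 : Matrix (Fin 2) (Fin 2) ℂ) := by
      rw [hEq, hdiag, Matrix.mul_smul, Matrix.smul_mul, Matrix.mul_one, hPinv]
    have h3 := congrFun (congrFun hfin 0) 1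
    simp only [Cv0, Matrix.cons_val', Matrix.cons_val_one, Matrix.cons_val_zero, Matrix.head_cons,
      Matrix.empty_val', Matrix.cons_val_fin_one, Matrix.smul_apply, Matrix.one_apply,
      Fin.isValue] at h3
    rw [if_neg (by decide)] at h3
    simp only [smul_zero] at h3
    exact hoff h3
end

section
/- Let a, b, C11 be real and C12 complex with C11 > |C12| > 0 and a > 0. The eigenvalues of the weighted quasiperiodic capacitance matrix C^{v,α} = diag(a+ib, a-ib)·[[C11, C12],[conj(C12), C11]] are λ_± = a·C11 ± sqrt(a²|C12|² - b²(C11² - |C12|²)), and they are both real if and only if |b| ≤ a·|C12|/sqrt(C11² - |C12|²). -/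
/-!
The characteristic polynomial of `CvAlpha` is `(λ - a C11)² - D` with
`D = a²|C12|² - b²(C11² - |C12|²)`, because `(a + ib)(a - ib) = a² + b²`. Its roots are `a C11 ± s`
for any square root `s` of `D`, and these are real exactly when `D ≥ 0`, which, since
`C11² - |C12|² > 0`, is the stated bound on `|b|`.
-/

open Matrix Complex

noncomputable def CvAlpha (a b C11 : ℝ) (C12 : ℂ) : Matrix (Fin 2) (Fin 2) ℂ :=
  !![((a : ℂ) + Complex.I * b) * (C11 : ℂ), ((a : ℂ) + Complex.I * b) * C12;
     ((a : ℂ) - Complex.I * b) * starRingEnd ℂ C12, ((a : ℂ) - Complex.I * b) * (C11 : ℂ)]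

theorem det_CvAlpha_sub_smul_one (a b C11 : ℝ) (C12 lam : ℂ) :
    (CvAlpha a b C11 C12 - lam • (1 : Matrix (Fin 2) (Fin 2) ℂ)).det =
      (lam - ((a * C11 : ℝ) : ℂ)) ^ 2 -
        ((a ^ 2 * ‖C12‖ ^ 2 - b ^ 2 * (C11 ^ 2 - ‖C12‖ ^ 2) : ℝ) : ℂ) := by
  have hnorm : C12 * starRingEnd ℂ C12 = (‖C12‖ : ℂ) ^ 2 := mul_conj' C12
  simp only [CvAlpha, det_fin_two, Fin.isValue, Matrix.sub_apply, of_apply, cons_val', cons_val_zero,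
    cons_val_fin_one, Matrix.smul_apply, one_apply_eq, smul_eq_mul, mul_one, cons_val_one, ne_eq,
    zero_ne_one, not_false_eq_true, one_apply_ne, mul_zero, sub_zero, one_ne_zero, ofReal_mul,
    ofReal_sub, ofReal_pow]
  linear_combination (-((a : ℂ) ^ 2 - I ^ 2 * (b : ℂ) ^ 2)) * hnorm
    + (-(b : ℂ) ^ 2 * ((C11 : ℂ) ^ 2 - (‖C12‖ : ℂ) ^ 2)) * I_sq

theorem Complex.im_eq_zero_iff_of_sq_eq_ofReal {s : ℂ} {D : ℝ} (hs : s ^ 2 = D) :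
    s.im = 0 ↔ 0 ≤ D := by
  constructor
  · intro h
    have hre : s = s.re := ext rfl (by simp [h])
    rw [hre, ← ofReal_pow, ofReal_inj] at hs
    exact hs ▸ sq_nonneg _
  · intro hD
    have : s ^ 2 = (√D : ℂ) ^ 2 := by rw [hs, ← ofReal_pow, Real.sq_sqrt hD]
    rcases sq_eq_sq_iff_eq_or_eq_neg.1 this with h | h <;> simp [h]

theorem abs_le_div_sqrt_iff {b c t : ℝ} (hc : 0 ≤ c) (ht : 0 < t) :
    |b| ≤ c / √t ↔ b ^ 2 * t ≤ c ^ 2 := by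
  rw [le_div_iff₀ (Real.sqrt_pos.2 ht), ← Real.sqrt_sq_eq_abs, ← Real.sqrt_mul (sq_nonneg b),
    Real.sqrt_le_left hc]

theorem stmt5_general (a b C11 : ℝ) (C12 : ℂ) (ha : 0 < a)
    (h11 : ‖C12‖ < C11)
    (s : ℂ)
    (hs : s ^ 2 = ((a ^ 2 * (‖C12‖) ^ 2
        - b ^ 2 * (C11 ^ 2 - (‖C12‖) ^ 2) : ℝ) : ℂ)) :
    (∀ lam : ℂ,
      (CvAlpha a b C11 C12 - lam • (1 : Matrix (Fin 2) (Fin 2) ℂ)).det = 0 ↔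
        lam = ((a * C11 : ℝ) : ℂ) + s ∨ lam = ((a * C11 : ℝ) : ℂ) - s) ∧
    ((∀ lam : ℂ,
        (CvAlpha a b C11 C12 - lam • (1 : Matrix (Fin 2) (Fin 2) ℂ)).det = 0 → lam.im = 0) ↔
      |b| ≤ a * ‖C12‖ / Real.sqrt (C11 ^ 2 - (‖C12‖) ^ 2)) := by
  have hroots : ∀ lam : ℂ, (CvAlpha a b C11 C12 - lam • (1 : Matrix (Fin 2) (Fin 2) ℂ)).det = 0 ↔
      lam = ((a * C11 : ℝ) : ℂ) + s ∨ lam = ((a * C11 : ℝ) : ℂ) - s := by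
    intro lam
    rw [det_CvAlpha_sub_smul_one, ← hs, sub_eq_zero, sq_eq_sq_iff_eq_or_eq_neg, sub_eq_iff_eq_add',
      sub_eq_iff_eq_add', ← sub_eq_add_neg]
  refine ⟨hroots, ?_⟩
  have ht : 0 < C11 ^ 2 - ‖C12‖ ^ 2 := by nlinarith [norm_nonneg C12]
  rw [abs_le_div_sqrt_iff (by positivity) ht, mul_pow, ← sub_nonneg,
    ← im_eq_zero_iff_of_sq_eq_ofReal hs]
  constructor
  · intro hreal
    simpa using hreal _ ((hroots _).2 (Or.inl rfl))
  · intro hs_im lam hlam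
    rcases (hroots lam).1 hlam with rfl | rfl <;> simp [hs_im]

theorem stmt5 (a b C11 : ℝ) (C12 : ℂ) (ha : 0 < a)
    (hC12 : 0 < ‖C12‖) (h11 : ‖C12‖ < C11)
    (s : ℂ)
    (hs : s ^ 2 = ((a ^ 2 * (‖C12‖) ^ 2
        - b ^ 2 * (C11 ^ 2 - (‖C12‖) ^ 2) : ℝ) : ℂ)) :
    (∀ lam : ℂ,
      (CvAlpha a b C11 C12 - lam • (1 : Matrix (Fin 2) (Fin 2) ℂ)).det = 0 ↔
        lam = ((a * C11 : ℝ) : ℂ) + s ∨ lam = ((a * C11 : ℝ) : ℂ) - s) ∧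
    ((∀ lam : ℂ,
        (CvAlpha a b C11 C12 - lam • (1 : Matrix (Fin 2) (Fin 2) ℂ)).det = 0 → lam.im = 0) ↔
      |b| ≤ a * ‖C12‖ / Real.sqrt (C11 ^ 2 - (‖C12‖) ^ 2)) :=
  stmt5_general a b C11 C12 ha h11 s hs
end

section
/- With the notation of the previous statement (a>0, k₃>0, L>0, |bL²| ≠ |ac|), the transmission coefficients t₊ = t₋ = i·k₃(b²L²/a + ac²/L²)/D are equal, and at λ* = 2k₃bc (the zero of r₊) the corresponding transmittance satisfies |t₊|² = (b²L²/a + ac²/L²)² / ( (b²L²/a - ac²/L²)² + 4b²c² ), which exceeds 1 whenever b ≠ 0, c ≠ 0 and (b²L²/a + ac²/L²)² > (b²L²/a - ac²/L²)² + 4b²c². -/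
open Complex

noncomputable def Dden (a b c k3 L lam : ℝ) : ℂ :=
  Complex.I * (k3 : ℂ) * ((b ^ 2 * L ^ 2 / a - a * c ^ 2 / L ^ 2 : ℝ) : ℂ) - (lam : ℂ)

noncomputable def tPlus (a b c k3 L lam : ℝ) : ℂ :=
  Complex.I * (k3 : ℂ) * ((b ^ 2 * L ^ 2 / a + a * c ^ 2 / L ^ 2 : ℝ) : ℂ) / Dden a b c k3 L lam

noncomputable def tMinus (a b c k3 L lam : ℝ) : ℂ :=
  Complex.I * (k3 : ℂ) * ((b ^ 2 * L ^ 2 / a + a * c ^ 2 / L ^ 2 : ℝ) : ℂ) / Dden a b c k3 L lam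

/-- When `y = z = 0` both sides are `0`, by the convention `x / 0 = 0`. -/
theorem sq_norm_I_mul_ofReal_div (x y z : ℝ) :
    ‖I * x / (I * y - z)‖ ^ 2 = x ^ 2 / (y ^ 2 + z ^ 2) := by
  have hnum : normSq (I * x) = x ^ 2 := by simp [normSq_apply, sq]
  have hden : normSq (I * y - z) = y ^ 2 + z ^ 2 := by simp [normSq_apply, sq, add_comm]
  rw [Complex.sq_norm, map_div₀, hnum, hden]

theorem sq_norm_tPlus (a b c k3 L lam : ℝ) :
    ‖tPlus a b c k3 L lam‖ ^ 2 =
      (k3 * (b ^ 2 * L ^ 2 / a + a * c ^ 2 / L ^ 2)) ^ 2 /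
        ((k3 * (b ^ 2 * L ^ 2 / a - a * c ^ 2 / L ^ 2)) ^ 2 + lam ^ 2) := by
  rw [← sq_norm_I_mul_ofReal_div, tPlus, Dden]
  push_cast
  ring_nf

theorem mul_sq_div_mul_sq_add_mul_sq (k x y z : ℝ) (hk : k ≠ 0) :
    (k * x) ^ 2 / ((k * y) ^ 2 + (k * z) ^ 2) = x ^ 2 / (y ^ 2 + z ^ 2) := by
  rw [← mul_div_mul_left (x ^ 2) _ (pow_ne_zero 2 hk)]
  ring

theorem sq_norm_tPlus_two_mul_mul_mul (a b c k3 L : ℝ) (hk3 : k3 ≠ 0) :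
    ‖tPlus a b c k3 L (2 * k3 * b * c)‖ ^ 2 =
      (b ^ 2 * L ^ 2 / a + a * c ^ 2 / L ^ 2) ^ 2 /
        ((b ^ 2 * L ^ 2 / a - a * c ^ 2 / L ^ 2) ^ 2 + 4 * b ^ 2 * c ^ 2) := by
  rw [sq_norm_tPlus, show 2 * k3 * b * c = k3 * (2 * b * c) by ring,
    mul_sq_div_mul_sq_add_mul_sq _ _ _ _ hk3]
  ring

theorem stmt8_general (a b c k3 L : ℝ) (hk3 : 0 < k3) :
    (∀ lam : ℝ, tPlus a b c k3 L lam = tMinus a b c k3 L lam) ∧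
    ‖tPlus a b c k3 L (2 * k3 * b * c)‖ ^ 2 =
      (b ^ 2 * L ^ 2 / a + a * c ^ 2 / L ^ 2) ^ 2 /
        ((b ^ 2 * L ^ 2 / a - a * c ^ 2 / L ^ 2) ^ 2 + 4 * b ^ 2 * c ^ 2) ∧
    (b ≠ 0 → c ≠ 0 →
      (b ^ 2 * L ^ 2 / a + a * c ^ 2 / L ^ 2) ^ 2 >
        (b ^ 2 * L ^ 2 / a - a * c ^ 2 / L ^ 2) ^ 2 + 4 * b ^ 2 * c ^ 2 →
      1 < ‖tPlus a b c k3 L (2 * k3 * b * c)‖ ^ 2) := by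
  have htrans := sq_norm_tPlus_two_mul_mul_mul a b c k3 L hk3.ne'
  refine ⟨fun _ => rfl, htrans, fun hb hc hgt => ?_⟩
  have hden : 0 < (b ^ 2 * L ^ 2 / a - a * c ^ 2 / L ^ 2) ^ 2 + 4 * b ^ 2 * c ^ 2 := by
    positivity
  rw [htrans]
  exact (one_lt_div hden).2 hgt

theorem stmt8 (a b c k3 L : ℝ) (ha : 0 < a) (hk3 : 0 < k3) (hL : 0 < L)
    (hne1 : b * L ^ 2 ≠ a * c) (hne2 : b * L ^ 2 ≠ -(a * c)) :
    (∀ lam : ℝ, tPlus a b c k3 L lam = tMinus a b c k3 L lam) ∧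
    ‖tPlus a b c k3 L (2 * k3 * b * c)‖ ^ 2 =
      (b ^ 2 * L ^ 2 / a + a * c ^ 2 / L ^ 2) ^ 2 /
        ((b ^ 2 * L ^ 2 / a - a * c ^ 2 / L ^ 2) ^ 2 + 4 * b ^ 2 * c ^ 2) ∧
    (b ≠ 0 → c ≠ 0 →
      (b ^ 2 * L ^ 2 / a + a * c ^ 2 / L ^ 2) ^ 2 >
        (b ^ 2 * L ^ 2 / a - a * c ^ 2 / L ^ 2) ^ 2 + 4 * b ^ 2 * c ^ 2 →
      1 < ‖tPlus a b c k3 L (2 * k3 * b * c)‖ ^ 2) :=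
  stmt8_general a b c k3 L hk3
end

section
/- Let r₊, r₋, t ∈ ℂ be given by r₊ = (λ* - 2k₃bc)/D, r₋ = (λ* + 2k₃bc)/D, t = i·k₃(b²L²/a + ac²/L²)/D with D = i·k₃(b²L²/a - ac²/L²) - λ*, for real a>0, k₃>0, L>0, b, c, λ* and |bL²| ≠ |ac|. Setting R₊ = |r₊|², R₋ = |r₋|², T = |t|², the generalized conservation relation R₊·R₋ + 2T - T² = 1 holds. -/
open Complex

noncomputable def tCoef (a b c k3 L lam : ℝ) : ℂ :=
  Complex.I * (k3 : ℂ) * ((b ^ 2 * L ^ 2 / a + a * c ^ 2 / L ^ 2 : ℝ) : ℂ) / Dden a b c k3 L lam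

noncomputable def rPlus (a b c k3 L lam : ℝ) : ℂ :=
  ((lam - 2 * k3 * b * c : ℝ) : ℂ) / Dden a b c k3 L lam

noncomputable def rMinus (a b c k3 L lam : ℝ) : ℂ :=
  ((lam + 2 * k3 * b * c : ℝ) : ℂ) / Dden a b c k3 L lam

/-!
Write `D = i x - λ`, so `|D|² = λ² + x²`, with `x = k₃ (B - A)` and transmission numerator
`y = k₃ (B + A)`, where `B = b²L²/a` and `A = ac²/L²`. Since `AB = b²c²`, we get
`y² = x² + m²` with `m = 2k₃bc`, the offset in the reflection numerators `λ ∓ m`.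
Putting `u = λ² - m²` and `v = y²`, this says `|D|² = u + v`, and the claimed relation
becomes `u² + 2v(u + v) - v² = (u + v)²`.
-/

lemma sq_norm_I_mul_sub (x lam : ℝ) : ‖I * x - lam‖ ^ 2 = lam ^ 2 + x ^ 2 := by
  rw [Complex.sq_norm, normSq_apply]
  simp only [sub_re, sub_im, mul_re, mul_im, I_re, I_im, ofReal_re, ofReal_im]
  ring

lemma reflection_transmission_identity {lam m x y : ℝ} (hxy : y ^ 2 = x ^ 2 + m ^ 2)
    (hD : I * x - lam ≠ 0) :
    ‖((lam - m : ℝ) : ℂ) / (I * x - lam)‖ ^ 2 * ‖((lam + m : ℝ) : ℂ) / (I * x - lam)‖ ^ 2 +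
        2 * ‖I * y / (I * x - lam)‖ ^ 2 - (‖I * y / (I * x - lam)‖ ^ 2) ^ 2 = 1 := by
  have hN : lam ^ 2 + x ^ 2 ≠ 0 := by
    rwa [← sq_norm_I_mul_sub, pow_ne_zero_iff two_ne_zero, norm_ne_zero_iff]
  simp only [norm_div, div_pow, sq_norm_I_mul_sub, norm_mul, norm_I, one_mul, norm_real,
    Real.norm_eq_abs, sq_abs]
  field_simp
  linear_combination (2 * lam ^ 2 + x ^ 2 - y ^ 2 - m ^ 2) * hxy

lemma sq_add_div_eq_sq_sub_div_add {a b c L : ℝ} (ha : a ≠ 0) (hL : L ≠ 0) :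
    (b ^ 2 * L ^ 2 / a + a * c ^ 2 / L ^ 2) ^ 2 =
      (b ^ 2 * L ^ 2 / a - a * c ^ 2 / L ^ 2) ^ 2 + (2 * b * c) ^ 2 := by
  field_simp
  ring

lemma sub_div_ne_zero_of_ne {a b c L : ℝ} (ha : a ≠ 0) (hL : L ≠ 0)
    (hne1 : b * L ^ 2 ≠ a * c) (hne2 : b * L ^ 2 ≠ -(a * c)) :
    b ^ 2 * L ^ 2 / a - a * c ^ 2 / L ^ 2 ≠ 0 := by
  have hprod : (b * L ^ 2 - a * c) * (b * L ^ 2 + a * c) ≠ 0 :=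
    mul_ne_zero (sub_ne_zero.mpr hne1) (fun h => hne2 (eq_neg_of_add_eq_zero_left h))
  rw [sub_ne_zero, Ne, div_eq_div_iff ha (pow_ne_zero 2 hL)]
  contrapose! hprod
  linear_combination hprod

theorem stmt10 (a b c k3 L : ℝ) (ha : 0 < a) (hk3 : 0 < k3) (hL : 0 < L)
    (hne1 : b * L ^ 2 ≠ a * c) (hne2 : b * L ^ 2 ≠ -(a * c)) :
    ∀ lam : ℝ,
      ‖rPlus a b c k3 L lam‖ ^ 2 * ‖rMinus a b c k3 L lam‖ ^ 2 +
        2 * ‖tCoef a b c k3 L lam‖ ^ 2 -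
        (‖tCoef a b c k3 L lam‖ ^ 2) ^ 2 = 1 := by
  intro lam
  set X := b ^ 2 * L ^ 2 / a - a * c ^ 2 / L ^ 2
  set Y := b ^ 2 * L ^ 2 / a + a * c ^ 2 / L ^ 2
  have hX : X ≠ 0 := sub_div_ne_zero_of_ne ha.ne' hL.ne' hne1 hne2
  have hXY : (k3 * Y) ^ 2 = (k3 * X) ^ 2 + (2 * k3 * b * c) ^ 2 := by
    linear_combination k3 ^ 2 * sq_add_div_eq_sq_sub_div_add (b := b) (c := c) ha.ne' hL.ne'
  have hD : I * ↑(k3 * X) - lam ≠ 0 := fun h => by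
    simpa [hk3.ne', hX] using congrArg im h
  simpa only [rPlus, rMinus, tCoef, Dden, ofReal_mul, mul_assoc] using
    reflection_transmission_identity hXY hD
end
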